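/- Suppose a matrix A admits the factorization A = P [[I, 0],[E, I]] [[A₁₁, A₁₂],[0, S]] where P is a permutation matrix and A₁₁ is k×k. Then σ_{k+1}(A) ≤ σ₁(S), where σ_i denotes the i-th largest singular value. -/

import Mathlib

/-! Multiplying out the block LU factorisation gives
`A = P (I; E) (A₁₁ A₁₂) + (P (0; I)) S (0 I)`. The first summand has rank at most `k`, so by the
Eckart–Young characterisation `σ_{k+1}(A)` is at most the spectral norm of the second. Since
`P (0; I)` has orthonormal columns and `(0 I)` has orthonormal rows, that norm is at most
`‖S‖₂ = σ₁(S)`. -/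

open Matrix BigOperators

/-- Spectral norm of a real matrix, via the operator norm of the induced
Euclidean linear map. -/
noncomputable def specNorm {m n : Type*} [Fintype m] [Fintype n] [DecidableEq n]
    (A : Matrix m n ℝ) : ℝ :=
  ‖(Matrix.toEuclideanLin A).toContinuousLinearMap‖

/-- The `i`-th largest singular value (1-indexed), via the Eckart–Young
variational characterization: `σ_i(A) = inf { ‖A − B‖₂ : rank B < i }`. -/
noncomputable def sv {m n : Type*} [Fintype m] [Fintype n] [DecidableEq n]
    (A : Matrix m n ℝ) (i : ℕ) : ℝ :=
  sInf ((fun B : Matrix m n ℝ => specNorm (A - B)) '' {B | B.rank < i})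

theorem Matrix.eq_zero_of_rank_eq_zero {m n R : Type*} [Fintype n] [Field R]
    {B : Matrix m n R} (h : B.rank = 0) : B = 0 := by
  classical
  have hB : B.mulVecLin = 0 := LinearMap.range_eq_bot.mp (Submodule.finrank_eq_zero.mp h)
  ext i j
  simpa using congrFun (LinearMap.congr_fun hB (Pi.single j 1)) i

section SpecNorm

variable {l m n : Type*} [Fintype l] [Fintype m] [Fintype n] [DecidableEq n]

theorem specNorm_nonneg (A : Matrix m n ℝ) : 0 ≤ specNorm A := norm_nonneg _

theorem specNorm_mul_le [DecidableEq m] (A : Matrix l m ℝ) (B : Matrix m n ℝ) :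
    specNorm (A * B) ≤ specNorm A * specNorm B := by
  open scoped Matrix.Norms.L2Operator in exact l2_opNorm_mul A B

theorem specNorm_conjTranspose [DecidableEq m] (A : Matrix m n ℝ) : specNorm Aᴴ = specNorm A := by
  open scoped Matrix.Norms.L2Operator in exact l2_opNorm_conjTranspose A

theorem specNorm_le_one_of_conjTranspose_mul_self_eq_one {U : Matrix m n ℝ} (hU : Uᴴ * U = 1) :
    specNorm U ≤ 1 := by
  have hsq : specNorm U * specNorm U ≤ 1 := by
    open scoped Matrix.Norms.L2Operator in
    change ‖U‖ * ‖U‖ ≤ 1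
    rw [← l2_opNorm_conjTranspose_mul_self, hU, ← diagonal_one, l2_opNorm_diagonal]
    exact pi_norm_le_iff_of_nonneg zero_le_one |>.mpr fun _ => by simp
  nlinarith [specNorm_nonneg U]

theorem specNorm_mul_mul_le_of_isometries {p : Type*} [Fintype p] [DecidableEq m] [DecidableEq p]
    {U : Matrix l m ℝ} {V : Matrix n p ℝ}
    (hU : Uᴴ * U = 1) (hV : V * Vᴴ = 1) (M : Matrix m n ℝ) :
    specNorm (U * M * V) ≤ specNorm M := by
  have hUn := specNorm_le_one_of_conjTranspose_mul_self_eq_one hU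
  have hVn : specNorm V ≤ 1 := by
    rw [← specNorm_conjTranspose]
    exact specNorm_le_one_of_conjTranspose_mul_self_eq_one (by rwa [conjTranspose_conjTranspose])
  calc specNorm (U * M * V) ≤ specNorm U * specNorm M * specNorm V :=
        (specNorm_mul_le (U * M) V).trans
          (by gcongr; exacts [specNorm_nonneg _, specNorm_mul_le U M])
    _ ≤ 1 * specNorm M * 1 := by have := specNorm_nonneg M; have := specNorm_nonneg V; gcongr
    _ = specNorm M := by ring

end SpecNorm

section SingularValue

variable {m n : Type*} [Fintype m] [Fintype n] [DecidableEq n]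

theorem sv_le_specNorm_sub (A : Matrix m n ℝ) {i : ℕ} {B : Matrix m n ℝ} (hB : B.rank < i) :
    sv A i ≤ specNorm (A - B) :=
  csInf_le ⟨0, by rintro _ ⟨C, -, rfl⟩; exact specNorm_nonneg _⟩ ⟨B, hB, rfl⟩

theorem sv_one (A : Matrix m n ℝ) : sv A 1 = specNorm A := by
  have hzero : (0 : Matrix m n ℝ) ∈ {B : Matrix m n ℝ | B.rank < 1} := by simp [rank_zero]
  refine le_antisymm (by simpa using sv_le_specNorm_sub A (B := 0) hzero) ?_
  refine le_csInf ⟨_, 0, hzero, rfl⟩ ?_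
  rintro _ ⟨B, hB, rfl⟩
  simp [eq_zero_of_rank_eq_zero (Nat.lt_one_iff.mp hB)]

end SingularValue

section BlockLU

variable {k m n R : Type*} [Fintype k] [Fintype m] [Fintype n] [CommRing R]

theorem fromBlocks_one_zero_mul_fromBlocks_zero [DecidableEq k] [DecidableEq m] [DecidableEq n]
    (E : Matrix m k R) (A₁₁ : Matrix k k R) (A₁₂ : Matrix k n R) (S : Matrix m n R) :
    (fromBlocks 1 0 E 1 : Matrix (k ⊕ m) (k ⊕ m) R) * fromBlocks A₁₁ A₁₂ 0 S
      = fromRows (1 : Matrix k k R) E * fromCols A₁₁ A₁₂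
        + fromRows (0 : Matrix k m R) (1 : Matrix m m R) * S
          * fromCols (0 : Matrix n k R) (1 : Matrix n n R) := by
  rw [fromBlocks_multiply, fromRows_mul_fromCols, fromRows_mul, fromRows_mul_fromCols]
  simp [fromBlocks_add]

theorem conjTranspose_fromRows_zero_one_mul_self [DecidableEq m] [StarRing R] :
    (fromRows (0 : Matrix k m R) (1 : Matrix m m R))ᴴ
      * fromRows (0 : Matrix k m R) (1 : Matrix m m R) = 1 := by
  simp [conjTranspose_fromRows_eq_fromCols_conjTranspose, fromCols_mul_fromRows]

theorem fromCols_zero_one_mul_conjTranspose_self [DecidableEq n] [StarRing R] :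
    fromCols (0 : Matrix n k R) (1 : Matrix n n R)
      * (fromCols (0 : Matrix n k R) (1 : Matrix n n R))ᴴ = 1 := by
  simp [conjTranspose_fromCols_eq_fromRows_conjTranspose, fromCols_mul_fromRows]

end BlockLU

/-- If `A = P [[I,0],[E,I]] [[A₁₁,A₁₂],[0,S]]` with `P` a permutation matrix and
`A₁₁` of size `k × k`, then `σ_{k+1}(A) ≤ σ₁(S)`. -/
theorem singularValue_succ_le_schur_complement
    (k m' n' : ℕ)
    (A : Matrix (Fin k ⊕ Fin m') (Fin k ⊕ Fin n') ℝ)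
    (P : Matrix (Fin k ⊕ Fin m') (Fin k ⊕ Fin m') ℝ)
    (σ : Equiv.Perm (Fin k ⊕ Fin m')) (hP : P = σ.permMatrix ℝ)
    (A₁₁ : Matrix (Fin k) (Fin k) ℝ) (A₁₂ : Matrix (Fin k) (Fin n') ℝ)
    (E : Matrix (Fin m') (Fin k) ℝ) (S : Matrix (Fin m') (Fin n') ℝ)
    (hA : A = P * Matrix.fromBlocks 1 0 E 1 * Matrix.fromBlocks A₁₁ A₁₂ 0 S) :
    sv A (k + 1) ≤ sv S 1 := by
  set B := P * fromRows (1 : Matrix (Fin k) (Fin k) ℝ) E * fromCols A₁₁ A₁₂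
  have hB : B.rank < k + 1 :=
    Nat.lt_succ_of_le <| (rank_mul_le_right _ _).trans <| by
      simpa using rank_le_card_height (fromCols A₁₁ A₁₂)
  set J : Matrix (Fin k ⊕ Fin m') (Fin m') ℝ := fromRows 0 1
  set K : Matrix (Fin n') (Fin k ⊕ Fin n') ℝ := fromCols 0 1
  have hAB : A - B = (P * J) * S * K := by
    rw [hA, Matrix.mul_assoc, fromBlocks_one_zero_mul_fromBlocks_zero, Matrix.mul_add,
      ← Matrix.mul_assoc P (fromRows _ _), add_sub_cancel_left]
    simp only [J, K, Matrix.mul_assoc]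
  have hJ : Jᴴ * J = 1 := conjTranspose_fromRows_zero_one_mul_self
  have hP' : Pᴴ * P = 1 := by
    rw [hP, conjTranspose_permMatrix, ← permMatrix_mul, mul_inv_cancel, permMatrix_one]
  have hPJ : (P * J)ᴴ * (P * J) = 1 := by
    rw [conjTranspose_mul, Matrix.mul_assoc, ← Matrix.mul_assoc Pᴴ, hP', Matrix.one_mul, hJ]
  have hK : K * Kᴴ = 1 := fromCols_zero_one_mul_conjTranspose_self
  calc sv A (k + 1) ≤ specNorm (A - B) := sv_le_specNorm_sub A hB
    _ ≤ specNorm S := by rw [hAB]; exact specNorm_mul_mul_le_of_isometries hPJ hK S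
    _ = sv S 1 := (sv_one S).symm
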